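/- Buchberger criterion for weight orders: Let M ⊆ F be generated by f_1,…,f_r, and let A^s →^Φ A^r → F be a presentation of the module ⟨in_{(ω,ε)}(f_1),…,in_{(ω,ε)}(f_r)⟩ (so Φ(A^s) is the syzygy module of the initial terms). If (1/t)·(f̃_1,…,f̃_r)∘Φ(Ã^s) ⊆ ⟨f̃_1,…,f̃_r⟩ in F~, then in_{(ω,ε)}(M) = ⟨in_{(ω,ε)}(f_1),…,in_{(ω,ε)}(f_r)⟩. -/

import Mathlib

/-!  Basic setup: the polynomial ring `A = K[X_1,…,X_n]`, a graded free module
`F = ⊕_{j} A(-d_j)` realized as `Fin k → A`, weight orders `(ω, ε)`, initial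
modules, Hilbert functions, graded free resolutions, Betti numbers,
regularity and componentwise notions, following Caviglia–Varbaro,
"Componentwise regularity (I)". -/

namespace CregPaper

abbrev A (K : Type*) [Field K] (n : ℕ) := MvPolynomial (Fin n) K

variable {K : Type*} [Field K] {n k : ℕ}

/-- `(ω)`-weight of an exponent vector `u`. -/
def wdeg (ω : Fin n → ℕ) (u : Fin n →₀ ℕ) : ℕ := u.sum fun i e => ω i * e

/-- total (standard) degree of an exponent vector `u`. -/
def tdeg (u : Fin n →₀ ℕ) : ℕ := u.sum fun _ e => e

/-- largest `(ω,ε)`-weight of a monomial in the support of `f ∈ F`. -/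
noncomputable def maxWt (ω : Fin n → ℕ) (ε : Fin k → ℕ) (f : Fin k → A K n) : ℕ :=
  Finset.univ.sup fun j => (f j).support.sup fun u => wdeg ω u + ε j

/-- the initial part `in_{(ω,ε)}(f)`: the sum of the terms of `f` of largest weight. -/
noncomputable def inForm (ω : Fin n → ℕ) (ε : Fin k → ℕ) (f : Fin k → A K n) :
    Fin k → A K n :=
  fun j => ∑ u ∈ (f j).support.filter fun u => wdeg ω u + ε j = maxWt ω ε f,
    MvPolynomial.monomial u ((f j).coeff u)

/-- the initial module `in_{(ω,ε)}(M)`. -/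
noncomputable def inMod (ω : Fin n → ℕ) (ε : Fin k → ℕ)
    (M : Submodule (A K n) (Fin k → A K n)) : Submodule (A K n) (Fin k → A K n) :=
  Submodule.span (A K n) {g | ∃ f ∈ M, f ≠ 0 ∧ g = inForm ω ε f}

/-- `f ∈ F = ⊕_j A(-d_j)` is homogeneous of (standard) degree `a`. -/
def IsHomog (d : Fin k → ℕ) (a : ℕ) (f : Fin k → A K n) : Prop :=
  ∀ j, ∀ u ∈ (f j).support, tdeg u + d j = a

/-- the `K`-subspace of `F` of homogeneous elements of degree `a`. -/
noncomputable def homogSub (d : Fin k → ℕ) (a : ℕ) : Submodule K (Fin k → A K n) where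
  carrier := {f | IsHomog d a f}
  add_mem' := by
    intro f g hf hg j u hu
    rcases Finset.mem_union.mp (MvPolynomial.support_add hu) with h | h
    · exact hf j u h
    · exact hg j u h
  zero_mem' := by intro j u hu; simp at hu
  smul_mem' := by
    intro c f hf j u hu
    exact hf j u (MvPolynomial.support_smul hu)

/-- the degree-`a` homogeneous component of `f ∈ F`. -/
noncomputable def homogComp (d : Fin k → ℕ) (f : Fin k → A K n) (a : ℕ) : Fin k → A K n :=
  fun j => ∑ u ∈ (f j).support.filter fun u => tdeg u + d j = a,
    MvPolynomial.monomial u ((f j).coeff u)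

/-- `M ⊆ F` is a graded submodule. -/
def IsGradedSub (d : Fin k → ℕ) (M : Submodule (A K n) (Fin k → A K n)) : Prop :=
  ∀ f ∈ M, ∀ a, homogComp d f a ∈ M

/-- Hilbert function of `M ⊆ F` in degree `a`. -/
noncomputable def hilb (d : Fin k → ℕ) (M : Submodule (A K n) (Fin k → A K n)) (a : ℕ) : ℕ :=
  Module.finrank K ↥(Submodule.restrictScalars K M ⊓ homogSub d a)

/-- the homogeneous maximal ideal `m = (X_1,…,X_n)` of `A`. -/
noncomputable def mIdeal (K : Type*) [Field K] (n : ℕ) : Ideal (A K n) :=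
  RingHom.ker (MvPolynomial.constantCoeff : A K n →+* K)

/-- graded Betti number `β_{0,a}(M) = dim_K (M/mM)_a`, the number of minimal
generators of the graded module `M` in degree `a`. -/
noncomputable def beta0 (d : Fin k → ℕ) (M : Submodule (A K n) (Fin k → A K n)) (a : ℕ) : ℕ :=
  hilb d M a - hilb d (mIdeal K n • M) a

/-- A graded free resolution of a graded submodule `M` of `F = ⊕_j A(-d_j)`:
`⋯ → A^{rk 1} → A^{rk 0} → M → 0`, each free module coming with degree shifts
`sh i`, all maps graded of degree `0`. -/
structure GFRes (d : Fin k → ℕ) (M : Submodule (A K n) (Fin k → A K n)) where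
  rk : ℕ → ℕ
  sh : (i : ℕ) → Fin (rk i) → ℕ
  aug : (Fin (rk 0) → A K n) →ₗ[A K n] (Fin k → A K n)
  diff : (i : ℕ) → ((Fin (rk (i+1)) → A K n) →ₗ[A K n] (Fin (rk i) → A K n))
  aug_range : LinearMap.range aug = M
  aug_hom : ∀ l, IsHomog d (sh 0 l) (aug (Pi.single l 1))
  diff_hom : ∀ i l, IsHomog (sh i) (sh (i+1) l) (diff i (Pi.single l 1))
  ex0 : LinearMap.range (diff 0) = LinearMap.ker aug
  exs : ∀ i, LinearMap.range (diff (i+1)) = LinearMap.ker (diff i)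

/-- minimality of a graded free resolution: all entries of the differential
matrices lie in the maximal ideal. -/
def GFRes.Minimal {d : Fin k → ℕ} {M : Submodule (A K n) (Fin k → A K n)}
    (res : GFRes d M) : Prop :=
  ∀ i x l, res.diff i x l ∈ mIdeal K n

/-- the graded Betti number `β_{i,j}(M)` read off from a (minimal) resolution. -/
noncomputable def GFRes.betti {d : Fin k → ℕ} {M : Submodule (A K n) (Fin k → A K n)}
    (res : GFRes d M) (i j : ℕ) : ℕ :=
  (Finset.univ.filter fun l => res.sh i l = j).card

/-- `reg_A(M) ≤ r`: there is a minimal graded free resolution of `M` with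
all shifts in homological degree `i` bounded by `i + r`. -/
def RegLE (d : Fin k → ℕ) (M : Submodule (A K n) (Fin k → A K n)) (r : ℕ) : Prop :=
  ∃ res : GFRes d M, res.Minimal ∧ ∀ i l, res.sh i l ≤ i + r

/-- `M_{⟨a⟩}`: the submodule generated by the homogeneous elements of degree `a` of `M`. -/
noncomputable def compSub (d : Fin k → ℕ) (M : Submodule (A K n) (Fin k → A K n)) (a : ℕ) :
    Submodule (A K n) (Fin k → A K n) :=
  Submodule.span (A K n) {f | f ∈ M ∧ IsHomog d a f}

/-- `M` is `r`-componentwise regular: `reg (M_{⟨a⟩}) ≤ a + r` for all `a`. -/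
def CWRegLE (d : Fin k → ℕ) (M : Submodule (A K n) (Fin k → A K n)) (r : ℕ) : Prop :=
  ∀ a, RegLE d (compSub d M a) (a + r)

/-- `M` is componentwise linear: each `M_{⟨a⟩}` is zero or has regularity `a`. -/
def CompLinear (d : Fin k → ℕ) (M : Submodule (A K n) (Fin k → A K n)) : Prop :=
  ∀ a, compSub d M a = ⊥ ∨ RegLE d (compSub d M a) a

/-- `M` is generated in degrees `≤ a`. -/
def GenInDegLE (d : Fin k → ℕ) (M : Submodule (A K n) (Fin k → A K n)) (a : ℕ) : Prop :=
  M ≤ Submodule.span (A K n) {f | f ∈ M ∧ ∃ b ≤ a, IsHomog d b f}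

end CregPaper
/-!  The flat family: `Ã = A[t]` with `deg X_i = (1, w_i)`, `deg t = (0,1)`,
homogenization of elements and modules with respect to `(ω,ε)`, saturation
with respect to `t`, and specializations `t = α`. -/

namespace CregPaper

variable {K : Type*} [Field K] {n k : ℕ}

abbrev At (K : Type*) [Field K] (n : ℕ) := Polynomial (A K n)

/-- the `(ω,ε)`-homogenization `f̃ ∈ F̃` of `f ∈ F`. -/
noncomputable def homogenize (ω : Fin n → ℕ) (ε : Fin k → ℕ) (f : Fin k → A K n) :
    Fin k → At K n :=
  fun j => ∑ u ∈ (f j).support,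
    Polynomial.monomial (maxWt ω ε f - (wdeg ω u + ε j))
      (MvPolynomial.monomial u ((f j).coeff u))

/-- the homogenization `M̃ ⊆ F̃` of a submodule `M ⊆ F`. -/
noncomputable def Mtilde (ω : Fin n → ℕ) (ε : Fin k → ℕ)
    (M : Submodule (A K n) (Fin k → A K n)) : Submodule (At K n) (Fin k → At K n) :=
  Submodule.span (At K n) {g | ∃ f ∈ M, g = homogenize ω ε f}

/-- saturation `N : t^∞` of a submodule `N ⊆ F̃`. -/
noncomputable def tsat (N : Submodule (At K n) (Fin k → At K n)) :
    Submodule (At K n) (Fin k → At K n) where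
  carrier := {x | ∃ e : ℕ, ((Polynomial.X : At K n) ^ e) • x ∈ N}
  add_mem' := by
    rintro x y ⟨e, he⟩ ⟨e', he'⟩
    refine ⟨e + e', ?_⟩
    rw [smul_add]
    refine Submodule.add_mem _ ?_ ?_
    · rw [pow_add, mul_comm, mul_smul]; exact Submodule.smul_mem _ _ he
    · rw [pow_add, mul_smul]; exact Submodule.smul_mem _ _ he'
  zero_mem' := ⟨0, by simp⟩
  smul_mem' := by
    rintro c x ⟨e, he⟩
    exact ⟨e, by rw [smul_comm]; exact Submodule.smul_mem _ _ he⟩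

/-- image in `F` of a submodule `N ⊆ F̃` under the evaluation `t ↦ α`. -/
noncomputable def evalSub (α : K) (N : Submodule (At K n) (Fin k → At K n)) :
    Submodule (A K n) (Fin k → A K n) :=
  Submodule.span (A K n)
    ((fun g : Fin k → At K n => fun j => Polynomial.eval (algebraMap K (A K n) α) (g j)) '' N)

/-- the linear map `R^r → M` sending the standard basis to `v`. -/
noncomputable def combo {R : Type*} [CommRing R] {M : Type*} [AddCommGroup M] [Module R M]
    {r : ℕ} (v : Fin r → M) : (Fin r → R) →ₗ[R] M where
  toFun x := ∑ i, x i • v i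
  map_add' x y := by simp [add_smul, Finset.sum_add_distrib]
  map_smul' c x := by simp [mul_smul, Finset.smul_sum]

end CregPaper


namespace CregPaper

variable {K : Type*} [Field K] {n k : ℕ}

lemma wdeg_add (ω : Fin n → ℕ) (x y : Fin n →₀ ℕ) : wdeg ω (x + y) = wdeg ω x + wdeg ω y := by
  unfold wdeg
  exact Finsupp.sum_add_index' (fun i => mul_zero _) (fun i b c => mul_add _ _ _)

lemma wdeg_zero (ω : Fin n → ℕ) : wdeg ω 0 = 0 := Finsupp.sum_zero_index

lemma coeff_selSum (a : A K n) (P : (Fin n →₀ ℕ) → Prop) [DecidablePred P] (x : Fin n →₀ ℕ) :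
    MvPolynomial.coeff x
        (∑ u ∈ a.support.filter P, MvPolynomial.monomial u (MvPolynomial.coeff u a))
      = if P x then MvPolynomial.coeff x a else 0 := by
  rw [MvPolynomial.coeff_sum]
  simp_rw [MvPolynomial.coeff_monomial]
  rw [Finset.sum_ite_eq' (a.support.filter P) x (fun u => MvPolynomial.coeff u a)]
  by_cases hP : P x
  · by_cases hs : x ∈ a.support
    · simp [Finset.mem_filter, hP, hs]
    · simp [Finset.mem_filter, hP, hs, MvPolynomial.notMem_support_iff.mp hs]
  · simp [Finset.mem_filter, hP]

section DC
variable (ω : Fin n → ℕ) (ε : Fin k → ℕ)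

/-- double coefficient of an element of `Ã^k`. -/
noncomputable def dc (q : Fin k → At K n) (j : Fin k) (e : ℕ) (x : Fin n →₀ ℕ) : K :=
  MvPolynomial.coeff x ((q j).coeff e)

lemma dc_ext {q q' : Fin k → At K n} (h : ∀ j e x, dc q j e x = dc q' j e x) : q = q' :=
  funext fun j => Polynomial.ext fun e => MvPolynomial.ext _ _ fun x => h j e x

@[simp] lemma dc_zero (j : Fin k) (e : ℕ) (x : Fin n →₀ ℕ) :
    dc (0 : Fin k → At K n) j e x = 0 := by simp [dc]

lemma dc_add (q q' : Fin k → At K n) (j : Fin k) (e : ℕ) (x : Fin n →₀ ℕ) :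
    dc (q + q') j e x = dc q j e x + dc q' j e x := by simp [dc]

lemma dc_sum {ι : Type*} (s : Finset ι) (t : ι → Fin k → At K n) (j : Fin k) (e : ℕ)
    (x : Fin n →₀ ℕ) : dc (∑ i ∈ s, t i) j e x = ∑ i ∈ s, dc (t i) j e x := by
  simp [dc, Polynomial.finset_sum_coeff, MvPolynomial.coeff_sum]

/-- weight-`v` component on `Ã^k`, where `t` has weight `1`. -/
noncomputable def cmpA (v : ℕ) (q : Fin k → At K n) : Fin k → At K n :=
  fun j => ∑ e ∈ Finset.range (v + 1), Polynomial.monomial e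
    (∑ x ∈ ((q j).coeff e).support.filter (fun x => e + wdeg ω x + ε j = v),
      MvPolynomial.monomial x (MvPolynomial.coeff x ((q j).coeff e)))

lemma dc_cmpA (v : ℕ) (q : Fin k → At K n) (j : Fin k) (e : ℕ) (x : Fin n →₀ ℕ) :
    dc (cmpA ω ε v q) j e x = if e + wdeg ω x + ε j = v then dc q j e x else 0 := by
  unfold cmpA dc
  rw [Polynomial.finset_sum_coeff]
  simp_rw [Polynomial.coeff_monomial]
  rw [MvPolynomial.coeff_sum]
  simp_rw [apply_ite (MvPolynomial.coeff x), MvPolynomial.coeff_zero]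
  rw [Finset.sum_ite_eq' (Finset.range (v+1)) e]
  by_cases hc : e + wdeg ω x + ε j = v
  · have he : e ∈ Finset.range (v + 1) := Finset.mem_range.mpr (by omega)
    rw [if_pos he, coeff_selSum, if_pos hc]
  · by_cases he : e ∈ Finset.range (v + 1)
    · rw [if_pos he, coeff_selSum, if_neg hc]
    · rw [if_neg he, if_neg hc]

/-- purity: every term of `q` has weight exactly `w`. -/
def PureA (w : ℕ) (q : Fin k → At K n) : Prop :=
  ∀ j e x, dc q j e x ≠ 0 → e + wdeg ω x + ε j = w

lemma cmpA_eq_self {w : ℕ} {q : Fin k → At K n} (h : PureA ω ε w q) :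
    cmpA ω ε w q = q := by
  apply dc_ext; intro j e x
  rw [dc_cmpA]
  by_cases h0 : dc q j e x = 0
  · simp [h0]
  · rw [if_pos (h j e x h0)]

lemma cmpA_eq_zero {w v : ℕ} {q : Fin k → At K n} (h : PureA ω ε w q) (hwv : w ≠ v) :
    cmpA ω ε v q = 0 := by
  apply dc_ext; intro j e x
  rw [dc_cmpA, dc_zero]
  by_cases h0 : dc q j e x = 0
  · simp [h0]
  · rw [if_neg (fun hc => hwv (by rw [← h j e x h0, hc]))]

lemma cmpA_zero (v : ℕ) : cmpA ω ε v (0 : Fin k → At K n) = 0 := by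
  apply dc_ext; intro j e x
  rw [dc_cmpA, dc_zero]; simp

lemma cmpA_add (v : ℕ) (q q' : Fin k → At K n) :
    cmpA ω ε v (q + q') = cmpA ω ε v q + cmpA ω ε v q' := by
  apply dc_ext; intro j e x
  rw [dc_add, dc_cmpA, dc_cmpA, dc_cmpA, dc_add]
  split <;> simp


lemma dc_monomial_smul (E : ℕ) (X : Fin n →₀ ℕ) (co : K) (q : Fin k → At K n)
    (j : Fin k) (e : ℕ) (x : Fin n →₀ ℕ) :
    dc ((Polynomial.monomial E (MvPolynomial.monomial X co) : At K n) • q) j e x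
      = if E ≤ e ∧ X ≤ x then co * dc q j (e - E) (x - X) else 0 := by
  have : ((Polynomial.monomial E (MvPolynomial.monomial X co) : At K n) • q) j
      = Polynomial.monomial E (MvPolynomial.monomial X co) * q j := rfl
  unfold dc
  rw [this]
  by_cases hE : E ≤ e
  · obtain ⟨d, rfl⟩ : ∃ d, e = d + E := ⟨e - E, by omega⟩
    rw [Polynomial.coeff_monomial_mul, MvPolynomial.coeff_monomial_mul']
    simp [hE]
  · rw [← Polynomial.C_mul_X_pow_eq_monomial, mul_assoc, Polynomial.coeff_C_mul,
      Polynomial.coeff_X_pow_mul']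
    rw [if_neg hE, if_neg (fun h => hE h.1)]
    simp

lemma wdeg_sub_add (ω : Fin n → ℕ) {X x : Fin n →₀ ℕ} (h : X ≤ x) :
    wdeg ω (x - X) + wdeg ω X = wdeg ω x := by
  rw [← wdeg_add]; congr 1; exact tsub_add_cancel_of_le h

lemma cmpA_monomial_smul (v E : ℕ) (X : Fin n →₀ ℕ) (co : K) (q : Fin k → At K n) :
    cmpA ω ε v ((Polynomial.monomial E (MvPolynomial.monomial X co) : At K n) • q)
      = if E + wdeg ω X ≤ v
        then (Polynomial.monomial E (MvPolynomial.monomial X co) : At K n) •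
               cmpA ω ε (v - (E + wdeg ω X)) q
        else 0 := by
  by_cases hEv : E + wdeg ω X ≤ v
  · rw [if_pos hEv]
    apply dc_ext; intro j e x
    rw [dc_cmpA, dc_monomial_smul, dc_monomial_smul, dc_cmpA]
    by_cases hax : E ≤ e ∧ X ≤ x
    · have hw := wdeg_sub_add ω hax.2
      have hE := hax.1
      simp only [hax, if_true]
      by_cases hc : e + wdeg ω x + ε j = v
      · simp only [hc, if_true,
          if_pos (show e - E + wdeg ω (x - X) + ε j = v - (E + wdeg ω X) by omega)]
      · simp only [hc, if_false,
          if_neg (show ¬(e - E + wdeg ω (x - X) + ε j = v - (E + wdeg ω X)) by omega), mul_zero, ite_self]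
    · simp only [hax, if_false, ite_self]
  · rw [if_neg hEv]
    apply dc_ext; intro j e x
    rw [dc_cmpA, dc_monomial_smul, dc_zero]
    by_cases hc : e + wdeg ω x + ε j = v
    · simp only [hc, if_true]
      by_cases hax : E ≤ e ∧ X ≤ x
      · exfalso; have hw := wdeg_sub_add ω hax.2; have hE := hax.1; omega
      · simp [hax]
    · simp [hc]


end DC

section More
variable (ω : Fin n → ℕ) (ε : Fin k → ℕ)

lemma combo_apply {R : Type*} [CommRing R] {M : Type*} [AddCommGroup M] [Module R M]
    {r : ℕ} (v : Fin r → M) (x : Fin r → R) : combo v x = ∑ i, x i • v i := rfl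

lemma wt_le_maxWt (f : Fin k → A K n) (j : Fin k) {u : Fin n →₀ ℕ} (hu : u ∈ (f j).support) :
    wdeg ω u + ε j ≤ maxWt ω ε f :=
  le_trans (Finset.le_sup (f := fun u => wdeg ω u + ε j) hu)
    (Finset.le_sup (f := fun j => (f j).support.sup fun u => wdeg ω u + ε j) (Finset.mem_univ j))

lemma coeff_inForm (f : Fin k → A K n) (j : Fin k) (x : Fin n →₀ ℕ) :
    MvPolynomial.coeff x (inForm ω ε f j)
      = if wdeg ω x + ε j = maxWt ω ε f then MvPolynomial.coeff x (f j) else 0 :=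
  coeff_selSum _ _ _

/-- evaluation `t ↦ 1`. -/
noncomputable def ev1 (q : Fin k → At K n) : Fin k → A K n := fun j => (q j).eval 1

lemma ev1_zero : ev1 (0 : Fin k → At K n) = 0 := funext fun j => by simp [ev1]

lemma ev1_add (q q' : Fin k → At K n) : ev1 (q + q') = ev1 q + ev1 q' :=
  funext fun j => by simp [ev1]

lemma ev1_sum {ι : Type*} (s : Finset ι) (t : ι → Fin k → At K n) :
    ev1 (∑ i ∈ s, t i) = ∑ i ∈ s, ev1 (t i) :=
  funext fun j => by simp [ev1, Polynomial.eval_finset_sum]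

lemma ev1_monomial_smul (E : ℕ) (X : Fin n →₀ ℕ) (co : K) (q : Fin k → At K n) :
    ev1 ((Polynomial.monomial E (MvPolynomial.monomial X co) : At K n) • q)
      = MvPolynomial.monomial X co • ev1 q :=
  funext fun j => by
    simp [ev1, Polynomial.eval_mul, Polynomial.eval_monomial]

lemma ev1_X_smul (q : Fin k → At K n) : ev1 ((Polynomial.X : At K n) • q) = ev1 q :=
  funext fun j => by simp [ev1, Polynomial.eval_mul]

lemma ev1_C_smul (a : A K n) (q : Fin k → At K n) :
    ev1 ((Polynomial.C a : At K n) • q) = a • ev1 q :=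
  funext fun j => by simp [ev1, Polynomial.eval_mul]

lemma ev1_homogenize (f : Fin k → A K n) : ev1 (homogenize ω ε f) = f :=
  funext fun j => by
    simp [ev1, homogenize, Polynomial.eval_finset_sum, Polynomial.eval_monomial,
      MvPolynomial.support_sum_monomial_coeff]

lemma pureA_homogenize (f : Fin k → A K n) :
    PureA ω ε (maxWt ω ε f) (homogenize ω ε f) := by
  intro j e x hne
  unfold dc homogenize at hne
  rw [Polynomial.finset_sum_coeff] at hne
  simp_rw [Polynomial.coeff_monomial] at hne
  rw [MvPolynomial.coeff_sum] at hne
  simp_rw [apply_ite (MvPolynomial.coeff x), MvPolynomial.coeff_zero,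
    MvPolynomial.coeff_monomial] at hne
  obtain ⟨u, hu, hune⟩ := Finset.exists_ne_zero_of_sum_ne_zero hne
  by_cases h1 : maxWt ω ε f - (wdeg ω u + ε j) = e
  · rw [if_pos h1] at hune
    by_cases h2 : u = x
    · subst h2
      have := wt_le_maxWt ω ε f j hu
      omega
    · rw [if_neg h2] at hune; exact absurd rfl hune
  · rw [if_neg h1] at hune; exact absurd rfl hune

lemma pureA_sum {ι : Type*} (s : Finset ι) (t : ι → Fin k → At K n) {w : ℕ}
    (h : ∀ i ∈ s, PureA ω ε w (t i)) : PureA ω ε w (∑ i ∈ s, t i) := by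
  intro j e x hne
  rw [dc_sum] at hne
  obtain ⟨i, hi, hine⟩ := Finset.exists_ne_zero_of_sum_ne_zero hne
  exact h i hi j e x hine

lemma pureA_C_smul {w W : ℕ} (a : A K n) (ha : ∀ x ∈ a.support, wdeg ω x + W = w)
    {q : Fin k → At K n} (hq : PureA ω ε W q) :
    PureA ω ε w ((Polynomial.C a : At K n) • q) := by
  intro j e x hne
  have hx : x ∈ (a * (q j).coeff e).support := by
    rw [MvPolynomial.mem_support_iff]
    intro h0
    apply hne
    unfold dc
    have : ((Polynomial.C a : At K n) • q) j = Polynomial.C a * q j := rfl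
    rw [this, Polynomial.coeff_C_mul, h0]
  obtain ⟨y, hy, z, hz, hyz⟩ := Finset.mem_add.mp (MvPolynomial.support_mul _ _ hx)
  have h1 := ha y hy
  have h2 := hq j e z (MvPolynomial.mem_support_iff.mp hz)
  subst hyz
  rw [wdeg_add]
  omega

lemma pureA_of_X_smul {w : ℕ} {q : Fin k → At K n}
    (h : PureA ω ε w ((Polynomial.X : At K n) • q)) :
    ∀ j e x, dc q j e x ≠ 0 → e + 1 + wdeg ω x + ε j = w := by
  intro j e x hne
  have hX : dc ((Polynomial.X : At K n) • q) j (e + 1) x = dc q j e x := by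
    unfold dc
    have : ((Polynomial.X : At K n) • q) j = Polynomial.X * q j := rfl
    rw [this, Polynomial.coeff_X_mul]
  have := h j (e + 1) x (by rw [hX]; exact hne)
  omega


lemma exists_rep_sum {r : ℕ} (f : Fin r → (Fin k → A K n)) {ι : Type*} (s : Finset ι)
    (t : ι → Fin k → At K n)
    (h : ∀ i ∈ s, ∀ v, ∃ c : Fin r → A K n,
      (∀ i' x, x ∈ (c i').support → wdeg ω x + maxWt ω ε (f i') ≤ v) ∧
      ∑ i', c i' • f i' = ev1 (cmpA ω ε v (t i))) :
    ∀ v, ∃ c : Fin r → A K n,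
      (∀ i' x, x ∈ (c i').support → wdeg ω x + maxWt ω ε (f i') ≤ v) ∧
      ∑ i', c i' • f i' = ev1 (cmpA ω ε v (∑ i ∈ s, t i)) := by
  classical
  induction s using Finset.induction with
  | empty => intro v; exact ⟨0, by simp, by simp [cmpA_zero, ev1_zero]⟩
  | @insert a s ha ih =>
      intro v
      obtain ⟨c1, hb1, he1⟩ := h a (Finset.mem_insert_self a s) v
      obtain ⟨c2, hb2, he2⟩ := ih (fun i hi => h i (Finset.mem_insert_of_mem hi)) v
      refine ⟨c1 + c2, ?_, ?_⟩
      · intro i' x hx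
        rcases Finset.mem_union.mp (MvPolynomial.support_add hx) with hx' | hx'
        · exact hb1 i' x hx'
        · exact hb2 i' x hx'
      · rw [Finset.sum_insert ha, cmpA_add, ev1_add, ← he1, ← he2,
          ← Finset.sum_add_distrib]
        exact Finset.sum_congr rfl fun i _ => add_smul _ _ _

lemma claimL {r : ℕ} (f : Fin r → (Fin k → A K n)) {q : Fin k → At K n}
    (hq : q ∈ Submodule.span (At K n) (Set.range fun i => homogenize ω ε (f i))) :
    ∀ v : ℕ, ∃ c : Fin r → A K n,
      (∀ i x, x ∈ (c i).support → wdeg ω x + maxWt ω ε (f i) ≤ v) ∧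
      ∑ i, c i • f i = ev1 (cmpA ω ε v q) := by
  classical
  induction hq using Submodule.span_induction with
  | mem p hp =>
      obtain ⟨i0, rfl⟩ := hp
      intro v
      by_cases hv : v = maxWt ω ε (f i0)
      · subst hv
        refine ⟨Pi.single i0 1, ?_, ?_⟩
        · intro i x hx
          rcases eq_or_ne i i0 with rfl | hne
          · rw [Pi.single_eq_same] at hx
            have hx0 : x = 0 := by
              by_contra h0
              have hco := MvPolynomial.mem_support_iff.mp hx
              rw [MvPolynomial.coeff_one, if_neg (fun h => h0 h.symm)] at hco
              exact hco rfl
            subst hx0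
            rw [wdeg_zero, zero_add]
          · rw [Pi.single_eq_of_ne hne] at hx; simp at hx
        · rw [cmpA_eq_self ω ε (pureA_homogenize ω ε (f i0)), ev1_homogenize]
          rw [Finset.sum_eq_single i0]
          · simp
          · intro b _ hb; rw [Pi.single_eq_of_ne hb, zero_smul]
          · intro hmem; exact absurd (Finset.mem_univ i0) hmem
      · exact ⟨0, by simp, by
          rw [cmpA_eq_zero ω ε (pureA_homogenize ω ε (f i0)) (fun h => hv h.symm)]
          simp [ev1_zero]⟩
  | zero => intro v; exact ⟨0, by simp, by simp [cmpA_zero, ev1_zero]⟩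
  | add p p' hp hp' ihp ihp' =>
      intro v
      obtain ⟨c1, hb1, he1⟩ := ihp v
      obtain ⟨c2, hb2, he2⟩ := ihp' v
      refine ⟨c1 + c2, ?_, ?_⟩
      · intro i x hx
        rcases Finset.mem_union.mp (MvPolynomial.support_add hx) with hx' | hx'
        · exact hb1 i x hx'
        · exact hb2 i x hx'
      · rw [cmpA_add, ev1_add, ← he1, ← he2, ← Finset.sum_add_distrib]
        exact Finset.sum_congr rfl fun i _ => add_smul _ _ _
  | smul b p hp ih =>
      have key : ∀ (E : ℕ) (X : Fin n →₀ ℕ) (co : K), ∀ v : ℕ,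
          ∃ c : Fin r → A K n,
            (∀ i x, x ∈ (c i).support → wdeg ω x + maxWt ω ε (f i) ≤ v) ∧
            ∑ i, c i • f i
              = ev1 (cmpA ω ε v
                  ((Polynomial.monomial E (MvPolynomial.monomial X co) : At K n) • p)) := by
        intro E X co v
        rw [cmpA_monomial_smul]
        by_cases hEv : E + wdeg ω X ≤ v
        · rw [if_pos hEv]
          obtain ⟨c, hc, he⟩ := ih (v - (E + wdeg ω X))
          refine ⟨fun i => MvPolynomial.monomial X co * c i, ?_, ?_⟩
          · intro i x hx
            obtain ⟨y, hy, z, hz, rfl⟩ := Finset.mem_add.mp (MvPolynomial.support_mul _ _ hx)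
            have hyX : y = X := Finset.mem_singleton.mp (MvPolynomial.support_monomial_subset hy)
            subst hyX
            have := hc i z hz
            rw [wdeg_add]
            omega
          · rw [ev1_monomial_smul, ← he, Finset.smul_sum]
            exact Finset.sum_congr rfl fun i _ => (smul_smul _ _ _).symm
        · rw [if_neg hEv]
          exact ⟨0, by simp, by simp [ev1_zero]⟩
      intro v
      have hbq : b • p = ∑ E ∈ b.support, ∑ X ∈ (b.coeff E).support,
          (Polynomial.monomial E
            (MvPolynomial.monomial X ((b.coeff E).coeff X)) : At K n) • p := by
        have hb : b = ∑ E ∈ b.support, ∑ X ∈ (b.coeff E).support,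
            (Polynomial.monomial E
              (MvPolynomial.monomial X ((b.coeff E).coeff X)) : At K n) := by
          conv_lhs => rw [b.as_sum_support]
          refine Finset.sum_congr rfl fun E _ => ?_
          conv_lhs => rw [← MvPolynomial.support_sum_monomial_coeff (b.coeff E), map_sum]
        conv_lhs => rw [hb]
        rw [Finset.sum_smul]
        exact Finset.sum_congr rfl fun E _ => Finset.sum_smul
      rw [hbq]
      exact exists_rep_sum ω ε f b.support _
        (fun E _ => exists_rep_sum ω ε f (b.coeff E).support _
          (fun X _ => key E X ((b.coeff E).coeff X))) v

end More

end CregPaper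

namespace CregPaper

section Main
variable {K : Type*} [Field K] {n k : ℕ}

noncomputable def pcw (ω : Fin n → ℕ) (v : ℕ) (a : A K n) : A K n :=
  ∑ x ∈ a.support.filter fun x => wdeg ω x = v, MvPolynomial.monomial x (a.coeff x)

lemma coeff_pcw (ω : Fin n → ℕ) (v : ℕ) (a : A K n) (x : Fin n →₀ ℕ) :
    MvPolynomial.coeff x (pcw ω v a) = if wdeg ω x = v then MvPolynomial.coeff x a else 0 :=
  coeff_selSum _ _ _

lemma support_sum_smul {r : ℕ} (t : Fin r → A K n) (p : Fin r → Fin k → A K n) (j : Fin k)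
    {x : Fin n →₀ ℕ} (hx : x ∈ ((∑ i, t i • p i) j).support) :
    ∃ i, ∃ y ∈ (t i).support, ∃ z ∈ (p i j).support, x = y + z := by
  classical
  rw [MvPolynomial.mem_support_iff] at hx
  have heq : (∑ i, t i • p i) j = ∑ i, t i * p i j := by
    rw [Finset.sum_apply]; rfl
  rw [heq, MvPolynomial.coeff_sum] at hx
  obtain ⟨i, _, hi⟩ := Finset.exists_ne_zero_of_sum_ne_zero hx
  obtain ⟨y, hy, z, hz, hyz⟩ := Finset.mem_add.mp
    (MvPolynomial.support_mul _ _ (MvPolynomial.mem_support_iff.mpr hi))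
  exact ⟨i, y, hy, z, hz, hyz.symm⟩

lemma inForm_split (ω : Fin n → ℕ) (ε : Fin k → ℕ) {w : ℕ} {g P R : Fin k → A K n}
    (hg : g = P + R)
    (hpure : ∀ j x, x ∈ (P j).support → wdeg ω x + ε j = w)
    (hlt : ∀ j x, x ∈ (R j).support → wdeg ω x + ε j < w)
    (hP : P ≠ 0) : inForm ω ε g = P := by
  have hco : ∀ (j : Fin k) x, MvPolynomial.coeff x (g j)
      = MvPolynomial.coeff x (P j) + MvPolynomial.coeff x (R j) := by
    intro j x; rw [hg]; simp
  have hmax : maxWt ω ε g = w := by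
    apply le_antisymm
    · apply Finset.sup_le; intro j _
      apply Finset.sup_le; intro u hu
      rw [MvPolynomial.mem_support_iff, hco] at hu
      by_cases h1 : MvPolynomial.coeff u (P j) = 0
      · have h2 : MvPolynomial.coeff u (R j) ≠ 0 := by
          intro h2; rw [h1, h2, add_zero] at hu; exact hu rfl
        exact le_of_lt (hlt j u (MvPolynomial.mem_support_iff.mpr h2))
      · exact le_of_eq (hpure j u (MvPolynomial.mem_support_iff.mpr h1))
    · obtain ⟨j, hj⟩ := Function.ne_iff.mp hP
      have hjne : P j ≠ 0 := by simpa using hj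
      obtain ⟨u, hu⟩ := MvPolynomial.ne_zero_iff.mp hjne
      have humem : u ∈ (P j).support := MvPolynomial.mem_support_iff.mpr hu
      have hw := hpure j u humem
      have hgco : MvPolynomial.coeff u (g j) ≠ 0 := by
        rw [hco]
        have hR : MvPolynomial.coeff u (R j) = 0 := by
          by_contra hR
          have := hlt j u (MvPolynomial.mem_support_iff.mpr hR); omega
        rw [hR, add_zero]; exact hu
      calc w = wdeg ω u + ε j := hw.symm
        _ ≤ maxWt ω ε g := wt_le_maxWt ω ε g j (MvPolynomial.mem_support_iff.mpr hgco)
  funext j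
  apply MvPolynomial.ext; intro x
  rw [coeff_inForm, hmax, hco]
  by_cases hc : wdeg ω x + ε j = w
  · rw [if_pos hc]
    have hR : MvPolynomial.coeff x (R j) = 0 := by
      by_contra hR
      have := hlt j x (MvPolynomial.mem_support_iff.mpr hR); omega
    rw [hR, add_zero]
  · rw [if_neg hc]
    have hPx : MvPolynomial.coeff x (P j) = 0 := by
      by_contra hPx
      exact hc (hpure j x (MvPolynomial.mem_support_iff.mpr hPx))
    rw [hPx]

end Main
end CregPaper

namespace CregPaper

/-- **Buchberger's criterion for weight orders.** Let
`M = ⟨f_1,…,f_r⟩ ⊆ F` and let `A^s →^Φ A^r → F` be a presentation of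
`⟨in(f_1),…,in(f_r)⟩` (so `range Φ` is the syzygy module of the initial forms).
If `(f̃_1,…,f̃_r) ∘ Φ(Ã^s) ⊆ t·⟨f̃_1,…,f̃_r⟩`, then
`in_{(ω,ε)}(M) = ⟨in(f_1),…,in(f_r)⟩`. -/
theorem buchberger_criterion_weight_orders
    {K : Type*} [Field K] {n k : ℕ} (ω : Fin n → ℕ) (ε : Fin k → ℕ) {r s : ℕ}
    (f : Fin r → (Fin k → A K n)) (M : Submodule (A K n) (Fin k → A K n))
    (hMgen : M = Submodule.span (A K n) (Set.range f))
    (Φ : (Fin s → A K n) →ₗ[A K n] (Fin r → A K n))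
    (hΦ : LinearMap.range Φ = LinearMap.ker (combo fun i => inForm ω ε (f i)))
    (hlift : ∀ x : Fin s → At K n,
      ∃ q ∈ Submodule.span (At K n) (Set.range fun i => homogenize ω ε (f i)),
        combo (fun i => homogenize ω ε (f i))
          (fun jr => ∑ i, x i * Polynomial.C (Φ (Pi.single i 1) jr))
          = (Polynomial.X : At K n) • q) :
    inMod ω ε M = Submodule.span (A K n) (Set.range fun i => inForm ω ε (f i)) := by
  classical
  set N := Submodule.span (A K n) (Set.range fun i => inForm ω ε (f i)) with hN
  have main : ∀ w : ℕ, ∀ a : Fin r → A K n,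
      (∀ i x, x ∈ (a i).support → wdeg ω x + maxWt ω ε (f i) ≤ w) →
      ∀ g : Fin k → A K n, g = ∑ i, a i • f i → g ≠ 0 →
      inForm ω ε g ∈ N := by
    intro w
    induction w using Nat.strong_induction_on with
    | _ w IH =>
    intro a ha g hg hg0
    set h : Fin r → A K n := fun i => pcw ω (w - maxWt ω ε (f i)) (a i) with hh
    set a' : Fin r → A K n := fun i => a i - h i with ha'def
    have hsupp_h : ∀ i x, x ∈ (h i).support → wdeg ω x + maxWt ω ε (f i) = w := by
      intro i x hx
      simp only [hh] at hx
      have hc := MvPolynomial.mem_support_iff.mp hx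
      rw [coeff_pcw] at hc
      by_cases hxw : wdeg ω x = w - maxWt ω ε (f i)
      · rw [if_pos hxw] at hc
        have := ha i x (MvPolynomial.mem_support_iff.mpr hc)
        omega
      · rw [if_neg hxw] at hc; exact absurd rfl hc
    have hsupp_a' : ∀ i x, x ∈ (a' i).support → wdeg ω x + maxWt ω ε (f i) < w := by
      intro i x hx
      simp only [ha'def, hh] at hx
      have hc := MvPolynomial.mem_support_iff.mp hx
      have hcc : MvPolynomial.coeff x (a i - pcw ω (w - maxWt ω ε (f i)) (a i))
          = MvPolynomial.coeff x (a i)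
            - MvPolynomial.coeff x (pcw ω (w - maxWt ω ε (f i)) (a i)) := by simp
      rw [hcc, coeff_pcw] at hc
      by_cases hxw : wdeg ω x = w - maxWt ω ε (f i)
      · rw [if_pos hxw, sub_self] at hc; exact absurd rfl hc
      · rw [if_neg hxw, sub_zero] at hc
        have := ha i x (MvPolynomial.mem_support_iff.mpr hc)
        omega
    have hsupp_in : ∀ i z (j : Fin k), z ∈ (inForm ω ε (f i) j).support →
        wdeg ω z + ε j = maxWt ω ε (f i) := by
      intro i z j hz
      have hz' := MvPolynomial.mem_support_iff.mp hz
      rw [coeff_inForm] at hz'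
      by_cases hc : wdeg ω z + ε j = maxWt ω ε (f i)
      · exact hc
      · rw [if_neg hc] at hz'; exact absurd rfl hz'
    have hsupp_rest : ∀ i z (j : Fin k), z ∈ ((f i - inForm ω ε (f i)) j).support →
        wdeg ω z + ε j < maxWt ω ε (f i) := by
      intro i z j hz
      have hcz := MvPolynomial.mem_support_iff.mp hz
      have hccz : MvPolynomial.coeff z ((f i - inForm ω ε (f i)) j)
          = MvPolynomial.coeff z (f i j) - MvPolynomial.coeff z (inForm ω ε (f i) j) := by simp
      rw [hccz, coeff_inForm] at hcz
      by_cases hc : wdeg ω z + ε j = maxWt ω ε (f i)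
      · rw [if_pos hc, sub_self] at hcz; exact absurd rfl hcz
      · rw [if_neg hc, sub_zero] at hcz
        have := wt_le_maxWt ω ε (f i) j (MvPolynomial.mem_support_iff.mpr hcz)
        omega
    set P : Fin k → A K n := ∑ i, h i • inForm ω ε (f i) with hPdef
    set Rst : Fin k → A K n := ∑ i, h i • (f i - inForm ω ε (f i)) with hRstdef
    set R2 : Fin k → A K n := ∑ i, a' i • f i with hR2def
    have hgPR : g = P + (Rst + R2) := by
      rw [hg, hPdef, hRstdef, hR2def, ← Finset.sum_add_distrib, ← Finset.sum_add_distrib]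
      refine Finset.sum_congr rfl fun i _ => ?_
      simp only [ha'def]
      rw [smul_sub, sub_smul]
      abel
    have hPsup : ∀ j x, x ∈ (P j).support → wdeg ω x + ε j = w := by
      intro j x hx
      rw [hPdef] at hx
      obtain ⟨i, y, hy, z, hz, rfl⟩ := support_sum_smul _ _ j hx
      rw [wdeg_add]
      have h1 := hsupp_h i y hy
      have h2 := hsupp_in i z j hz
      omega
    have hRsup : ∀ j x, x ∈ ((Rst + R2) j).support → wdeg ω x + ε j < w := by
      intro j x hx
      rcases Finset.mem_union.mp (MvPolynomial.support_add hx) with hx' | hx'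
      · rw [hRstdef] at hx'
        obtain ⟨i, y, hy, z, hz, rfl⟩ := support_sum_smul _ _ j hx'
        rw [wdeg_add]
        have h1 := hsupp_h i y hy
        have h2 := hsupp_rest i z j hz
        omega
      · rw [hR2def] at hx'
        obtain ⟨i, y, hy, z, hz, rfl⟩ := support_sum_smul _ _ j hx'
        rw [wdeg_add]
        have h1 := hsupp_a' i y hy
        have h2 := wt_le_maxWt ω ε (f i) j hz
        omega
    by_cases hP0 : P = 0
    · have hker : h ∈ LinearMap.ker (combo fun i => inForm ω ε (f i)) := by
        rw [LinearMap.mem_ker, combo_apply, ← hPdef]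
        exact hP0
      rw [← hΦ] at hker
      obtain ⟨y, hy⟩ := hker
      obtain ⟨q, hqmem, hq⟩ := hlift fun i => Polynomial.C (y i)
      simp only [combo_apply] at hq
      have hyrep : y = ∑ i, y i • (Pi.single i 1 : Fin s → A K n) := by
        funext j'
        rw [Finset.sum_apply, Finset.sum_eq_single j']
        · simp
        · intro b _ hb
          have : (Pi.single b 1 : Fin s → A K n) j' = 0 := Pi.single_eq_of_ne (Ne.symm hb) _
          simp [this]
        · intro hmem; exact absurd (Finset.mem_univ _) hmem
      have hΦh : ∀ jr, (∑ i, y i * Φ (Pi.single i 1) jr) = h jr := by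
        intro jr
        conv_rhs => rw [← hy, hyrep]
        rw [map_sum, Finset.sum_apply]
        refine Finset.sum_congr rfl fun i _ => ?_
        rw [map_smul]
        rfl
      have hargsum : ∀ jr, (∑ i, (Polynomial.C (y i) : At K n)
          * Polynomial.C (Φ (Pi.single i 1) jr)) = (Polynomial.C (h jr) : At K n) := by
        intro jr
        simp_rw [← Polynomial.C_mul]
        rw [← map_sum, hΦh jr]
      have hXq : (Polynomial.X : At K n) • q
          = ∑ jr, (Polynomial.C (h jr) : At K n) • homogenize ω ε (f jr) := by
        rw [← hq]
        refine Finset.sum_congr rfl fun jr _ => ?_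
        rw [hargsum jr]
      have hpureXq : PureA ω ε w ((Polynomial.X : At K n) • q) := by
        rw [hXq]
        apply pureA_sum
        intro i _
        exact pureA_C_smul ω ε (h i) (hsupp_h i) (pureA_homogenize ω ε (f i))
      have hq1 := pureA_of_X_smul ω ε hpureXq
      obtain ⟨c, hcb, hce⟩ := claimL ω ε f hqmem (w - 1)
      have hcmp : cmpA ω ε (w - 1) q = q :=
        cmpA_eq_self ω ε (fun j e x hne => by have := hq1 j e x hne; omega)
      have hT : ∑ i, c i • f i = ∑ i, h i • f i := by
        rw [hce, hcmp, ← ev1_X_smul q, hXq, ev1_sum]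
        refine Finset.sum_congr rfl fun i _ => ?_
        rw [ev1_C_smul, ev1_homogenize]
      have hsplit : ∀ i, a i • f i = h i • f i + a' i • f i := by
        intro i
        simp only [ha'def]
        rw [sub_smul]
        abel
      rcases Nat.eq_zero_or_pos w with hw0 | hwpos
      · exfalso
        apply hg0
        have hq0 : q = 0 := dc_ext fun j e x => by
          rw [dc_zero]
          by_contra hne
          have := hq1 j e x hne; omega
        have ha'0 : ∀ i, a' i = 0 := by
          intro i
          by_contra hne
          obtain ⟨x, hx⟩ := MvPolynomial.ne_zero_iff.mp hne
          have := hsupp_a' i x (MvPolynomial.mem_support_iff.mpr hx)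
          omega
        have hgc : g = ∑ i, c i • f i + ∑ i, a' i • f i := by
          rw [hg, Finset.sum_congr rfl fun i _ => hsplit i, Finset.sum_add_distrib, hT]
        rw [hgc, hce, hcmp, hq0, ev1_zero]
        simp [ha'0]
      · have hg' : g = ∑ i, (c i + a' i) • f i := by
          rw [hg, Finset.sum_congr rfl fun i _ => hsplit i, Finset.sum_add_distrib, ← hT,
            ← Finset.sum_add_distrib]
          exact Finset.sum_congr rfl fun i _ => (add_smul _ _ _).symm
        refine IH (w - 1) (by omega) (fun i => c i + a' i) ?_ g hg' hg0
        intro i x hx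
        rcases Finset.mem_union.mp (MvPolynomial.support_add hx) with hx' | hx'
        · have := hcb i x hx'; omega
        · have := hsupp_a' i x hx'; omega
    · have hin : inForm ω ε g = P := inForm_split ω ε hgPR hPsup hRsup hP0
      rw [hin, hPdef]
      apply Submodule.sum_smul_mem
      intro i _
      exact Submodule.subset_span ⟨i, rfl⟩
  apply le_antisymm
  · have hunfold : inMod ω ε M
        = Submodule.span (A K n) {g | ∃ f0 ∈ M, f0 ≠ 0 ∧ g = inForm ω ε f0} := rfl
    rw [hunfold, Submodule.span_le]
    rintro g ⟨g0, hg0M, hg0ne, rfl⟩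
    rw [hMgen, Submodule.mem_span_range_iff_exists_fun (R := A K n)] at hg0M
    obtain ⟨a, haeq⟩ := hg0M
    exact main (Finset.univ.sup fun i => (a i).support.sup
        fun x => wdeg ω x + maxWt ω ε (f i)) a
      (fun i x hx => le_trans
        (Finset.le_sup (f := fun x => wdeg ω x + maxWt ω ε (f i)) hx)
        (Finset.le_sup (f := fun i => (a i).support.sup
          fun x => wdeg ω x + maxWt ω ε (f i)) (Finset.mem_univ i))) g0 haeq.symm hg0ne
  · rw [Submodule.span_le]
    rintro g ⟨i, rfl⟩
    show inForm ω ε (f i) ∈ inMod ω ε M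
    by_cases hfi : f i = 0
    · have h0 : inForm ω ε (f i) = 0 := by
        rw [hfi]; funext j; simp [inForm]
      rw [h0]
      exact Submodule.zero_mem _
    · exact Submodule.subset_span
        ⟨f i, by rw [hMgen]; exact Submodule.subset_span ⟨i, rfl⟩, hfi, rfl⟩


end CregPaper
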